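/- arXiv:1311.6879 — 3 statements merged into one kernel-verified Lean document; each statement's English description precedes it below -/
import Mathlib

section
/- If an n-cell null-boundary CA (n ≥ 3) has an interior rule f_i (1 ≤ i ≤ n−2, 0-indexed) that is unbalanced, i.e., f_i takes some value d on strictly more than 4 of its 8 inputs, then the global transition map is not injective; hence the CA is irreversible. -/
/-!
If `F = glob f` is bijective, the states `s` with `F s i = true` are exactly as many as
those with `s i = true`, namely `4 · 2^(n-3)`. For an interior cell, `F s i` is `f i` applied to
the window `(s (i-1), s i, s (i+1))` of three distinct cells, and every one of the eight windows
occurs in exactly `2^(n-3)` states, so the first count is `|f i⁻¹(true)| · 2^(n-3)`.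
Hence `f i` takes the value `true` on exactly four inputs.
-/

/-- State extended by null boundary values. -/
def ext {n : ℕ} (s : Fin n → Bool) (k : ℕ) : Bool :=
  if h : k < n then s ⟨k, h⟩ else false

/-- Global map of the null-boundary CA with rule vector `f`. -/
def glob {n : ℕ} (f : Fin n → (Bool × Bool × Bool → Bool)) (s : Fin n → Bool) :
    Fin n → Bool :=
  fun i => f i (if (i : ℕ) = 0 then false else ext s ((i : ℕ) - 1), s i, ext s ((i : ℕ) + 1))

open Finset Fintype Function

theorem card_filter_comp_of_bijective {α β : Type*} [Fintype α] [Fintype β] {F : α → β}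
    (hF : Bijective F) (P : β → Prop) [DecidablePred P] :
    #{a | P (F a)} = #{b | P b} :=
  card_equiv (Equiv.ofBijective F hF) (by simp)

theorem card_filter_comp_eq_mul_of_card_fiber {α γ : Type*} [Fintype α] [Fintype γ]
    [DecidableEq γ] (p : α → γ) {c : ℕ} (hp : ∀ x, #{a | p a = x} = c)
    (P : γ → Prop) [DecidablePred P] :
    #{a | P (p a)} = #{x | P x} * c := by
  rw [card_eq_sum_card_fiberwise (f := p) (t := {x | P x}) (by intro a; simp)]
  calc ∑ x ∈ {x | P x}, #{a ∈ {a | P (p a)} | p a = x}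
      = ∑ x ∈ {x | P x}, c := sum_congr rfl fun x hx ↦ by
        rw [filter_filter, ← hp x]
        congr 1
        ext a
        simp only [mem_filter, mem_univ, true_and, and_iff_right_iff_imp]
        rintro rfl
        exact (mem_filter.mp hx).2
    _ = #{x | P x} * c := by rw [sum_const, smul_eq_mul]

section Window

variable {ι β : Type*} [Fintype ι] [DecidableEq ι] [Fintype β] [DecidableEq β]
  {j k l : ι}

theorem card_filter_window_eq (hjk : j ≠ k) (hjl : j ≠ l) (hkl : k ≠ l) (x : β × β × β) :
    #{s : ι → β | (s j, s k, s l) = x} = card β ^ (card ι - 3) := by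
  obtain ⟨a, b, c⟩ := x
  set box := update (update (update (fun _ ↦ (univ : Finset β)) j {a}) k {b}) l {c}
  have hbox : ({s : ι → β | (s j, s k, s l) = (a, b, c)} : Finset _) = piFinset box := by
    ext s
    simp only [mem_filter, mem_univ, true_and, mem_piFinset, Prod.mk.injEq]
    constructor
    · rintro ⟨rfl, rfl, rfl⟩ m
      by_cases hl : m = l <;> by_cases hk : m = k <;> by_cases hj : m = j <;> simp_all [box]
    · intro h
      exact ⟨by simpa [box, hjk, hjl] using h j, by simpa [box, hkl] using h k,
        by simpa [box] using h l⟩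
  have hcard : ∀ m, #(box m) = if m ∈ ({j, k, l} : Finset ι)ᶜ then card β else 1 := by
    intro m
    by_cases hl : m = l <;> by_cases hk : m = k <;> by_cases hj : m = j <;> simp_all [box]
  have hjkl : #({j, k, l} : Finset ι) = 3 := by
    rw [card_insert_of_notMem (by simp [hjk, hjl]), card_pair hkl]
  rw [hbox, card_piFinset, prod_congr rfl fun m _ ↦ hcard m, prod_ite_mem_eq, prod_const,
    card_compl, hjkl]

theorem card_filter_comp_window (hjk : j ≠ k) (hjl : j ≠ l) (hkl : k ≠ l)
    (g : β × β × β → Prop) [DecidablePred g] :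
    #{s : ι → β | g (s j, s k, s l)} = #{x | g x} * card β ^ (card ι - 3) :=
  card_filter_comp_eq_mul_of_card_fiber _ (card_filter_window_eq hjk hjl hkl) g

end Window

theorem glob_apply_of_pos_of_succ_lt {n : ℕ} (f : Fin n → (Bool × Bool × Bool → Bool))
    (s : Fin n → Bool) (i : Fin n) (h0 : 0 < (i : ℕ)) (hn : (i : ℕ) + 1 < n) :
    glob f s i = f i (s ⟨i - 1, by omega⟩, s i, s ⟨i + 1, hn⟩) := by
  simp [glob, _root_.ext, h0.ne', hn, show (i : ℕ) - 1 < n by omega]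

theorem unbalanced_interior_irreversible_general {n : ℕ}
    (f : Fin n → (Bool × Bool × Bool → Bool)) (i : Fin n)
    (h1 : 1 ≤ (i : ℕ)) (h2 : (i : ℕ) ≤ n - 2)
    (hunb : (Finset.univ.filter (fun x : Bool × Bool × Bool => f i x = true)).card ≠ 4) :
    ¬ Function.Injective (glob f) := by
  intro hinj
  have hn : (i : ℕ) + 1 < n := by omega
  have hjk : (⟨i - 1, by omega⟩ : Fin n) ≠ i := Fin.ne_of_val_ne (by dsimp only; omega)
  have hjl : (⟨i - 1, by omega⟩ : Fin n) ≠ ⟨i + 1, hn⟩ := Fin.ne_of_val_ne (by dsimp only; omega)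
  have hkl : i ≠ ⟨i + 1, hn⟩ := Fin.ne_of_val_ne (by dsimp only; omega)
  have hcount := card_filter_comp_of_bijective (Finite.injective_iff_bijective.mp hinj)
    (fun t ↦ t i = true)
  simp only [glob_apply_of_pos_of_succ_lt f _ i h1 hn] at hcount
  rw [card_filter_comp_window hjk hjl hkl (fun x ↦ f i x = true),
    card_filter_comp_window hjk hjl hkl (fun x ↦ x.2.1 = true) (ι := Fin n),
    show #{x : Bool × Bool × Bool | x.2.1 = true} = 4 by decide] at hcount
  exact hunb (Nat.eq_of_mul_eq_mul_right (by positivity) hcount)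

/-- An interior unbalanced rule makes the global map non-injective. -/
theorem unbalanced_interior_irreversible {n : ℕ} (hn : 3 ≤ n)
    (f : Fin n → (Bool × Bool × Bool → Bool)) (i : Fin n)
    (h1 : 1 ≤ (i : ℕ)) (h2 : (i : ℕ) ≤ n - 2)
    (hunb : (Finset.univ.filter (fun x : Bool × Bool × Bool => f i x = true)).card ≠ 4) :
    ¬ Function.Injective (glob f) :=
  unbalanced_interior_irreversible_general f i h1 h2 hunb
end

section
/- If the first rule f_0 of an n-cell null-boundary CA (n ≥ 2) is not balanced over its 4 effective RMTs — i.e., the restriction (c,r) ↦ f_0(false, c, r) does not take the value true on exactly 2 of its 4 inputs — then the global transition map is not injective. -/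
/-!
If the global map `F` were injective it would be a bijection of the finite set of
configurations, so exactly half of all configurations `s` would have `F s 0 = true`.
But `F s 0 = f₀(false, s 0, s 1)` depends only on the first two cells, each pattern
`(s 0, s 1)` being shared by `2 ^ n` configurations; hence that count is
`#{(c, r) | f₀(false, c, r)} * 2 ^ n`, forcing `f₀` to be balanced.
-/

open scoped Finset

theorem card_filter_comp_of_bijective_s7 {α : Type*} [Fintype α] {g : α → α}
    (hg : Function.Bijective g) (p : α → Prop) [DecidablePred p] :
    #{x | p (g x)} = #{x | p x} := by
  rw [← Fintype.card_subtype, ← Fintype.card_subtype]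
  exact Fintype.card_congr ((Equiv.ofBijective g hg).subtypeEquiv fun _ => Iff.rfl)

theorem card_filter_apply_zero_one {α : Type*} [Fintype α] (n : ℕ)
    (p : α × α → Prop) [DecidablePred p] :
    #{s : Fin (n + 2) → α | p (s 0, s 1)} = #{q | p q} * Fintype.card α ^ n := by
  let e : (Fin (n + 2) → α) ≃ (α × α) × (Fin n → α) :=
    ((Fin.consEquiv fun _ => α).symm.trans
      ((Equiv.refl α).prodCongr (Fin.consEquiv fun _ => α).symm)).trans
      (Equiv.prodAssoc α α (Fin n → α)).symm
  have he : ∀ s, (e s).1 = (s 0, s 1) := fun _ => rfl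
  simp only [← Fintype.card_subtype]
  rw [Fintype.card_congr ((e.subtypeEquiv fun s => by rw [he])
    |>.trans Equiv.prodSubtypeFstEquivSubtypeProd), Fintype.card_prod, Fintype.card_fun,
    Fintype.card_fin]

theorem glob_apply_zero {n : ℕ} (f : Fin (n + 2) → (Bool × Bool × Bool → Bool))
    (s : Fin (n + 2) → Bool) : glob f s 0 = f 0 (false, s 0, s 1) := by
  simp [glob, ext]

/-- If the first rule is not balanced over its 4 effective RMTs, the CA is not injective. -/
theorem first_rule_unbalanced_irreversible {n : ℕ}
    (f : Fin (n + 2) → (Bool × Bool × Bool → Bool))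
    (hunb : (Finset.univ.filter
        (fun p : Bool × Bool => f 0 (false, p.1, p.2) = true)).card ≠ 2) :
    ¬ Function.Injective (glob f) := by
  intro hinj
  apply hunb
  have hcount := card_filter_comp_of_bijective_s7 (Finite.injective_iff_bijective.mp hinj)
    (fun t : Fin (n + 2) → Bool => t 0 = true)
  simp only [glob_apply_zero] at hcount
  rw [card_filter_apply_zero_one n (fun q : Bool × Bool => f 0 (false, q.1, q.2) = true),
    card_filter_apply_zero_one n (fun q : Bool × Bool => q.1 = true)] at hcount
  have hhalf : #{q : Bool × Bool | q.1 = true} = 2 := rfl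
  rw [hhalf] at hcount
  exact Nat.eq_of_mul_eq_mul_right (by positivity) hcount
end

section
/- If the last rule f_{n−1} of an n-cell null-boundary CA (n ≥ 2) is not balanced over its 4 effective RMTs — i.e., the restriction (l,c) ↦ f_{n−1}(l, c, false) does not take the value true on exactly 2 of its 4 inputs — then the global transition map is not injective. -/
/-!
The output of the last cell depends only on the last two input cells, through
`g (l, x) = f_{n-1} (l, x, false)`. A bijective global map preserves the number of states
whose last cell equals `b`. Counting states by their last two cells, `2 ^ (n - 2) * #g⁻¹(b)`
states are mapped to such a state, and there are `2 ^ (n - 2) * 2` of them; so both fibres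
of `g` have size two.
-/

section Counting

open Finset

theorem card_filter_comp_of_bijective_s8 {X : Type*} [Fintype X] {F : X → X} (hF : F.Bijective)
    (p : X → Prop) [DecidablePred p] : #{x | p (F x)} = #{x | p x} :=
  card_nbij F (fun x hx => by simpa using hx) hF.injective.injOn fun y hy => by
    obtain ⟨x, rfl⟩ := hF.surjective y
    exact ⟨x, by simpa using hy, rfl⟩

theorem card_filter_snd_eq {α β : Type*} [Fintype α] [Fintype β] [DecidableEq β] (c : β) :
    #{p : α × β | p.2 = c} = Fintype.card α := by
  rw [← univ_product_univ, filter_product_right (q := (· = c)), card_product, filter_eq',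
    if_pos (mem_univ c)]
  simp

theorem card_filter_last_two {α : Type*} [Fintype α] [DecidableEq α] (n : ℕ)
    (q : α × α → Prop) [DecidablePred q] :
    #{s : Fin (n + 2) → α | q (s (Fin.last n).castSucc, s (Fin.last (n + 1)))} =
      Fintype.card α ^ n * #{p | q p} := by
  have hpow : Fintype.card α ^ n = #(univ : Finset (Fin n → α)) := by simp
  rw [hpow, ← card_product]
  refine card_nbij'
    (fun s => (Fin.init (Fin.init s), (s (Fin.last n).castSucc, s (Fin.last (n + 1)))))
    (fun x => Fin.snoc (Fin.snoc x.1 x.2.1) x.2.2) ?_ ?_ ?_ ?_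
  · intro s hs
    simpa using hs
  · intro x hx
    simpa using hx
  · intro s _
    change Fin.snoc (Fin.snoc (Fin.init (Fin.init s)) (Fin.init s (Fin.last n))) _ = s
    simp only [Fin.snoc_init_self]
  · intro x _
    simp

theorem card_filter_eq_card_of_bijective_of_apply_last {α : Type*} [Fintype α] [DecidableEq α]
    {n : ℕ} {F : (Fin (n + 2) → α) → Fin (n + 2) → α} (hF : F.Bijective) (g : α × α → α)
    (hg : ∀ s, F s (Fin.last (n + 1)) = g (s (Fin.last n).castSucc, s (Fin.last (n + 1))))
    (c : α) : #{p | g p = c} = Fintype.card α := by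
  have hcount := card_filter_comp_of_bijective_s8 hF (· (Fin.last (n + 1)) = c)
  have hlast := card_filter_last_two (α := α) n (·.2 = c)
  simp only [hg] at hcount
  rw [card_filter_last_two n (g · = c), hlast, card_filter_snd_eq] at hcount
  exact Nat.eq_of_mul_eq_mul_left (pow_pos (Fintype.card_pos_iff.mpr ⟨c⟩) n) hcount

end Counting

theorem glob_apply_last {n : ℕ} (f : Fin (n + 2) → (Bool × Bool × Bool → Bool))
    (s : Fin (n + 2) → Bool) :
    glob f s (Fin.last (n + 1)) =
      f (Fin.last (n + 1)) (s (Fin.last n).castSucc, s (Fin.last (n + 1)), false) := by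
  simp [glob, ext, Fin.last, Fin.castSucc_mk]

/-- If the last rule is not balanced over its 4 effective RMTs, the CA is not injective. -/
theorem last_rule_unbalanced_irreversible {n : ℕ}
    (f : Fin (n + 2) → (Bool × Bool × Bool → Bool))
    (hunb : (Finset.univ.filter
        (fun p : Bool × Bool => f (Fin.last (n + 1)) (p.1, p.2, false) = true)).card ≠ 2) :
    ¬ Function.Injective (glob f) := fun hinj =>
  hunb <| (card_filter_eq_card_of_bijective_of_apply_last (Finite.injective_iff_bijective.mp hinj)
    (fun p => f (Fin.last (n + 1)) (p.1, p.2, false)) (glob_apply_last f) true).trans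
    Fintype.card_bool
end
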